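/- arXiv:1305.5575 — 2 statements merged into one kernel-verified Lean document; each statement's English description precedes it below -/
import Mathlib

section
/- For all real numbers κ > 0, σ > 0 and T > 0, with ϖ = √(κ² + 2σ²) (so that ϖ > κ), one has the closed-form identity ∫₀^T B(κ,σ;u) du = 2T/(ϖ−κ) + (4/(ϖ²−κ²)) · log( 2ϖ / ((1+e^{ϖT})ϖ + (e^{ϖT}−1)κ) ). -/
open Real MeasureTheory

/-!
With `a = ϖ - κ`, `b = ϖ + κ` (both positive because `ϖ² = κ² + 2σ² > κ²`) the denominator of `B`
is `a + b e^{ϖu}`, and the partial fraction decomposition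
`(e - 1)/(a + b e) = -1/a + ((a + b)/(a b)) · e/(a + b e)` exhibits
`-u/a + ((a + b)/(a b ϖ)) log (a + b e^{ϖu})` as an antiderivative of `(e^{ϖu} - 1)/(a + b e^{ϖu})`.
-/

lemma abs_lt_sqrt_sq_add_two_mul_sq (κ : ℝ) {σ : ℝ} (hσ : σ ≠ 0) :
    |κ| < √(κ ^ 2 + 2 * σ ^ 2) := by
  rw [← sqrt_sq_eq_abs]
  exact sqrt_lt_sqrt (sq_nonneg κ) (by nlinarith [sq_pos_of_ne_zero hσ])

section AffineExp

variable {a b : ℝ} (c : ℝ)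

lemma hasDerivAt_antideriv_exp_sub_one_div (ha : 0 < a) (hb : 0 < b) (hc : c ≠ 0) (u : ℝ) :
    HasDerivAt (fun u => -u / a + (a + b) / (a * b * c) * log (a + b * exp (c * u)))
      ((exp (c * u) - 1) / (a + b * exp (c * u))) u := by
  have hD : 0 < a + b * exp (c * u) := by positivity
  have hexp : HasDerivAt (fun u => exp (c * u)) (exp (c * u) * c) u :=
    ((hasDerivAt_id u).const_mul c).exp.congr_deriv (by simp)
  have hlog := ((hexp.const_mul b).const_add a).log hD.ne'
  refine (((hasDerivAt_id u).neg.div_const a).add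
    (hlog.const_mul ((a + b) / (a * b * c)))).congr_deriv ?_
  field_simp [ha.ne', hb.ne', hD.ne']
  ring

lemma integral_exp_sub_one_div (ha : 0 < a) (hb : 0 < b) (hc : c ≠ 0) (T : ℝ) :
    ∫ u in (0 : ℝ)..T, (exp (c * u) - 1) / (a + b * exp (c * u)) =
      -T / a + (a + b) / (a * b * c) * log ((a + b * exp (c * T)) / (a + b)) := by
  have hcont : Continuous fun u => (exp (c * u) - 1) / (a + b * exp (c * u)) :=
    Continuous.div (by fun_prop) (by fun_prop) fun u => by positivity
  rw [intervalIntegral.integral_eq_sub_of_hasDerivAt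
    (fun u _ => hasDerivAt_antideriv_exp_sub_one_div c ha hb hc u) (hcont.intervalIntegrable _ _),
    log_div (by positivity) (by positivity)]
  simp only [mul_zero, exp_zero, mul_one]
  ring

end AffineExp

theorem integral_B_closed_form_general (κ σ T ϖ : ℝ) (B : ℝ → ℝ)
    (hσ : 0 < σ)
    (hϖ : ϖ = Real.sqrt (κ ^ 2 + 2 * σ ^ 2))
    (hB : ∀ u : ℝ, B u =
      -(2 * (Real.exp (ϖ * u) - 1)) / (2 * ϖ + (κ + ϖ) * (Real.exp (ϖ * u) - 1))) :
    (∫ u in (0:ℝ)..T, B u)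
      = 2 * T / (ϖ - κ) +
        4 / (ϖ ^ 2 - κ ^ 2) *
          Real.log (2 * ϖ /
            ((1 + Real.exp (ϖ * T)) * ϖ + (Real.exp (ϖ * T) - 1) * κ)) := by
  obtain ⟨hκ_gt, hκ_lt⟩ := abs_lt.mp (hϖ ▸ abs_lt_sqrt_sq_add_two_mul_sq κ hσ.ne')
  have ha : 0 < ϖ - κ := by linarith
  have hb : 0 < ϖ + κ := by linarith
  have hϖ0 : ϖ ≠ 0 := by linarith
  have hB' : B = fun u => -2 * ((exp (ϖ * u) - 1) / ((ϖ - κ) + (ϖ + κ) * exp (ϖ * u))) := by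
    ext u
    rw [hB u]
    ring_nf
  have hlog : log (2 * ϖ / ((1 + exp (ϖ * T)) * ϖ + (exp (ϖ * T) - 1) * κ)) =
      -log ((ϖ - κ + (ϖ + κ) * exp (ϖ * T)) / (ϖ - κ + (ϖ + κ))) := by
    rw [← log_inv, inv_div]
    ring_nf
  rw [hB', intervalIntegral.integral_const_mul, integral_exp_sub_one_div ϖ ha hb hϖ0,
    hlog, show ϖ ^ 2 - κ ^ 2 = (ϖ - κ) * (ϖ + κ) by ring]
  generalize log _ = L
  field_simp
  ring

/-- For κ, σ > 0 and T > 0, with `ϖ = √(κ² + 2σ²)` (so that ϖ > κ)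
and `B(κ,σ;u) = −2(e^{ϖu} − 1)/(2ϖ + (κ+ϖ)(e^{ϖu} − 1))`, one has
`∫₀ᵀ B(u)du = 2T/(ϖ−κ) + (4/(ϖ²−κ²))·log(2ϖ/((1+e^{ϖT})ϖ + (e^{ϖT}−1)κ))`. -/
theorem integral_B_closed_form (κ σ T ϖ : ℝ) (B : ℝ → ℝ)
    (hκ : 0 < κ) (hσ : 0 < σ) (hT : 0 < T)
    (hϖ : ϖ = Real.sqrt (κ ^ 2 + 2 * σ ^ 2))
    (hB : ∀ u : ℝ, B u =
      -(2 * (Real.exp (ϖ * u) - 1)) / (2 * ϖ + (κ + ϖ) * (Real.exp (ϖ * u) - 1))) :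
    (∫ u in (0:ℝ)..T, B u)
      = 2 * T / (ϖ - κ) +
        4 / (ϖ ^ 2 - κ ^ 2) *
          Real.log (2 * ϖ /
            ((1 + Real.exp (ϖ * T)) * ϖ + (Real.exp (ϖ * T) - 1) * κ)) :=
  integral_B_closed_form_general κ σ T ϖ B hσ hϖ hB
end

section
/- Let T > 0, a_ℓ > 0, b_ℓ > 0, c_ℓ, d_g ∈ ℝ, e_g < 0, f_g < 0, let κ_A, κ_B, σ_A, σ_B > 0, α_A, α_B ≥ 0, c_A, c_B, d_A, d_B ≥ 0, λ̂_A, λ̂_B, λ̂_c ≥ 0 and set λ = λ̂_A + λ̂_B + λ̂_c. Let F̃_A, F̃_B be probability measures on [0,∞) and F_{AB} a probability measure on [0,∞)², and define Φ(θ_A,θ_B) = ∫ e^{θ_A y_A + θ_B y_B} F_{AB}(dy), Φ̃_A(θ) = ∫ e^{θy} F̃_A(dy), Φ̃_B(θ) = ∫ e^{θy} F̃_B(dy). Define β_A(u) = a_ℓ · β(κ_A, σ_A√a_ℓ, e_g/a_ℓ; u), β_B(u) = b_ℓ · β(κ_B, σ_B√b_ℓ, f_g/b_ℓ; u), and β_{AB}(u)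 = d_g − (λ + c_ℓ)u + ∫₀^u [ α_A β_A(v) + α_B β_B(v) + λ̂_c Φ(c_Aβ_A(v), c_Bβ_B(v)) + λ̂_A Φ̃_A(d_Aβ_A(v)) + λ̂_B Φ̃_B(d_Bβ_B(v)) ] dv. Then β_A(u) ≤ 0 and β_B(u) ≤ 0 for all u ∈ [0,T] (so all the exponential moments above are finite), and on [0,T] the triple satisfies: β_A′ = −κ_A β_A + (σ_A²/2) β_A² − a_ℓ with β_A(0) = e_g; β_B′ = −κ_B β_B + (σ_B²/2) β_B² − b_ℓ with β_B(0) = f_g; and β_{AB}′(u) = α_A β_A(u) + α_B β_B(u) − λ − c_ℓ + λ̂_c Φ(c_Aβ_A(u), c_Bβ_B(u)) + λ̂_A Φ̃_A(d_Aβ_A(u)) + λ̂_B Φ̃_B(d_Bβ_B(u)) with β_{AB}(0) = d_g. -/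
open MeasureTheory Real Set

/-- `B(κ,σ;u) = −2(e^{ϖu} − 1)/(2ϖ + (κ+ϖ)(e^{ϖu} − 1))` with `ϖ = √(κ² + 2σ²)`. -/
noncomputable def Bfun (κ σ u : ℝ) : ℝ :=
  -(2 * (Real.exp (Real.sqrt (κ ^ 2 + 2 * σ ^ 2) * u) - 1)) /
    (2 * Real.sqrt (κ ^ 2 + 2 * σ ^ 2) +
      (κ + Real.sqrt (κ ^ 2 + 2 * σ ^ 2)) *
        (Real.exp (Real.sqrt (κ ^ 2 + 2 * σ ^ 2) * u) - 1))

/-- `φ(u) = σ²∫₀ᵘ B(κ,σ;v)dv − κu`. -/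
noncomputable def phiFun (κ σ u : ℝ) : ℝ :=
  σ ^ 2 * (∫ v in (0:ℝ)..u, Bfun κ σ v) - κ * u

/-- `β(κ,σ,b;u) = B(κ,σ;u) + e^{φ(u)}·(1/b − (σ²/2)∫₀ᵘ e^{φ(v)}dv)⁻¹`. -/
noncomputable def betaFun (κ σ b u : ℝ) : ℝ :=
  Bfun κ σ u + Real.exp (phiFun κ σ u) *
    (1 / b - σ ^ 2 / 2 * ∫ v in (0:ℝ)..u, Real.exp (phiFun κ σ v))⁻¹

/-!
`B(κ,σ;·)` is an explicit solution of the Riccati equation `y' = -κy + σ²y²/2 - 1` with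
`y(0) = 0`, and it is nonpositive on `[0,∞)`. Once one solution `B` is known, the substitution
`y = B + 1/w` linearises the equation: the other solutions are `B + e^φ/G` with `φ' = σ²B - κ` and
`G' = -σ²e^φ/2`, which is the shape of `β(κ,σ,b;·)`. Its value at `0` is `b`, and for `b < 0` the
factor `G = 1/b - (σ²/2)∫₀ᵘ e^φ` stays negative, so `β ≤ 0`. Multiplying a solution for
`(κ, σ√a)` by `a` yields a solution of the equation with constant term `-a`; this gives `β_A, β_B`.

Since `β_A, β_B ≤ 0` and the jump laws live on `[0,∞)`, the exponentials in the moment generating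
functions are bounded by `1`: they are integrable, and by dominated convergence `Φ(c_Aβ_A, c_Bβ_B)`,
`Φ̃_A(d_Aβ_A)`, `Φ̃_B(d_Bβ_B)` are continuous in `u`, so the fundamental theorem of calculus
differentiates `β_{AB}`.
-/

theorem ContinuousOn.hasDerivWithinAt_intervalIntegral {f : ℝ → ℝ} {a b u : ℝ}
    (hf : ContinuousOn f (Icc a b)) (hu : u ∈ Icc a b) :
    HasDerivWithinAt (fun x => ∫ v in a..x, f v) (f u) (Icc a b) u := by
  have : Fact (u ∈ Icc a b) := ⟨hu⟩
  have hint : IntervalIntegrable f volume a u :=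
    (hf.mono (by rw [uIcc_of_le hu.1]; exact Icc_subset_Icc le_rfl hu.2)).intervalIntegrable
  exact intervalIntegral.integral_hasDerivWithinAt_right hint
    (hf.stronglyMeasurableAtFilter_nhdsWithin measurableSet_Icc u) (hf u hu)

theorem HasDerivWithinAt.riccati_add_exp_mul_inv {B φ G : ℝ → ℝ} {s : Set ℝ} {u κ q c : ℝ}
    (hB : HasDerivWithinAt B (-κ * B u + q / 2 * B u ^ 2 - c) s u)
    (hφ : HasDerivWithinAt φ (q * B u - κ) s u)
    (hG : HasDerivWithinAt G (-(q / 2 * Real.exp (φ u))) s u) (hG0 : G u ≠ 0) :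
    HasDerivWithinAt (fun v => B v + Real.exp (φ v) * (G v)⁻¹)
      (-κ * (B u + Real.exp (φ u) * (G u)⁻¹)
        + q / 2 * (B u + Real.exp (φ u) * (G u)⁻¹) ^ 2 - c) s u := by
  refine (hB.add (hφ.exp.mul (hG.inv hG0))).congr_deriv ?_
  simp only [Pi.inv_apply]
  field_simp
  ring

section Riccati

variable {κ σ b u T : ℝ}

theorem add_sqrt_sq_add_two_mul_sq_nonneg : 0 ≤ κ + √(κ ^ 2 + 2 * σ ^ 2) := by
  linarith [neg_abs_le κ, abs_le_sqrt (show κ ^ 2 ≤ κ ^ 2 + 2 * σ ^ 2 by nlinarith [sq_nonneg σ])]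

theorem Bfun_denom_pos (hσ : σ ≠ 0) (hu : 0 ≤ u) :
    0 < 2 * √(κ ^ 2 + 2 * σ ^ 2) +
      (κ + √(κ ^ 2 + 2 * σ ^ 2)) * (exp (√(κ ^ 2 + 2 * σ ^ 2) * u) - 1) := by
  have hϖ : 0 < √(κ ^ 2 + 2 * σ ^ 2) := sqrt_pos.2 (by positivity)
  have hκϖ := add_sqrt_sq_add_two_mul_sq_nonneg (κ := κ) (σ := σ)
  have he : 0 ≤ exp (√(κ ^ 2 + 2 * σ ^ 2) * u) - 1 := sub_nonneg.2 (one_le_exp (by positivity))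
  positivity

theorem Bfun_zero : Bfun κ σ 0 = 0 := by simp [Bfun]

theorem Bfun_nonpos (hu : 0 ≤ u) : Bfun κ σ u ≤ 0 := by
  have hκϖ := add_sqrt_sq_add_two_mul_sq_nonneg (κ := κ) (σ := σ)
  have he : 0 ≤ exp (√(κ ^ 2 + 2 * σ ^ 2) * u) - 1 := sub_nonneg.2 (one_le_exp (by positivity))
  exact div_nonpos_of_nonpos_of_nonneg (by linarith) (by positivity)

theorem hasDerivAt_Bfun (hσ : σ ≠ 0) (hu : 0 ≤ u) :
    HasDerivAt (Bfun κ σ) (-κ * Bfun κ σ u + σ ^ 2 / 2 * Bfun κ σ u ^ 2 - 1) u := by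
  have hD := Bfun_denom_pos (κ := κ) hσ hu
  simp only [Bfun] at hD ⊢
  set ϖ := √(κ ^ 2 + 2 * σ ^ 2)
  have hσ2 : σ ^ 2 = (ϖ ^ 2 - κ ^ 2) / 2 := by rw [sq_sqrt (by positivity)]; ring
  have hE : HasDerivAt (fun u => exp (ϖ * u)) (exp (ϖ * u) * ϖ) u := by
    simpa using ((hasDerivAt_id' u).const_mul ϖ).exp
  have hnum : HasDerivAt (fun u => -(2 * (exp (ϖ * u) - 1))) (-(2 * (exp (ϖ * u) * ϖ))) u :=
    ((hE.sub_const 1).const_mul 2).neg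
  have hden : HasDerivAt (fun u => 2 * ϖ + (κ + ϖ) * (exp (ϖ * u) - 1))
      ((κ + ϖ) * (exp (ϖ * u) * ϖ)) u :=
    ((hE.sub_const 1).const_mul (κ + ϖ)).const_add (2 * ϖ)
  refine (hnum.div hden hD.ne').congr_deriv ?_
  rw [hσ2]
  field_simp
  ring

theorem hasDerivWithinAt_phiFun (hσ : σ ≠ 0) (hu : u ∈ Icc 0 T) :
    HasDerivWithinAt (phiFun κ σ) (σ ^ 2 * Bfun κ σ u - κ) (Icc 0 T) u := by
  have hB : ContinuousOn (Bfun κ σ) (Icc 0 T) := fun v hv =>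
    (hasDerivAt_Bfun hσ hv.1).continuousAt.continuousWithinAt
  exact ((hB.hasDerivWithinAt_intervalIntegral hu).const_mul (σ ^ 2)).sub
    ((hasDerivAt_id' u).const_mul κ).hasDerivWithinAt |>.congr_deriv (by ring)

theorem betaFun_denom_neg (hb : b < 0) (hu : 0 ≤ u) :
    1 / b - σ ^ 2 / 2 * ∫ v in (0:ℝ)..u, exp (phiFun κ σ v) < 0 := by
  have : 0 ≤ σ ^ 2 / 2 * ∫ v in (0:ℝ)..u, exp (phiFun κ σ v) :=
    mul_nonneg (by positivity) (intervalIntegral.integral_nonneg hu fun v _ => (exp_pos _).le)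
  linarith [one_div_neg.2 hb]

theorem betaFun_zero : betaFun κ σ b 0 = b := by
  simp [betaFun, phiFun, Bfun_zero]

theorem betaFun_nonpos (hb : b < 0) (hu : 0 ≤ u) : betaFun κ σ b u ≤ 0 :=
  add_nonpos (Bfun_nonpos hu) <| mul_nonpos_of_nonneg_of_nonpos (exp_pos _).le <|
    inv_nonpos.2 (betaFun_denom_neg hb hu).le

theorem hasDerivWithinAt_betaFun (hσ : σ ≠ 0) (hb : b < 0) (hu : u ∈ Icc 0 T) :
    HasDerivWithinAt (betaFun κ σ b)
      (-κ * betaFun κ σ b u + σ ^ 2 / 2 * betaFun κ σ b u ^ 2 - 1) (Icc 0 T) u := by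
  have hexp : ContinuousOn (fun v => exp (phiFun κ σ v)) (Icc 0 T) :=
    continuous_exp.comp_continuousOn fun v hv => (hasDerivWithinAt_phiFun hσ hv).continuousWithinAt
  exact HasDerivWithinAt.riccati_add_exp_mul_inv (hasDerivAt_Bfun hσ hu.1).hasDerivWithinAt
    (hasDerivWithinAt_phiFun hσ hu)
    (((hexp.hasDerivWithinAt_intervalIntegral hu).const_mul (σ ^ 2 / 2)).const_sub (1 / b))
    (betaFun_denom_neg hb hu.1).ne

theorem mul_betaFun_zero {a e : ℝ} (ha : a ≠ 0) : a * betaFun κ σ (e / a) 0 = e := by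
  rw [betaFun_zero, mul_div_cancel₀ _ ha]

theorem mul_betaFun_nonpos {a e : ℝ} (ha : 0 < a) (he : e < 0) (hu : 0 ≤ u) :
    a * betaFun κ σ (e / a) u ≤ 0 :=
  mul_nonpos_of_nonneg_of_nonpos ha.le (betaFun_nonpos (div_neg_of_neg_of_pos he ha) hu)

theorem hasDerivWithinAt_mul_betaFun {a e : ℝ} (hσ : σ ≠ 0) (ha : 0 < a) (he : e < 0)
    (hu : u ∈ Icc 0 T) :
    HasDerivWithinAt (fun v => a * betaFun κ (σ * √a) (e / a) v)
      (-κ * (a * betaFun κ (σ * √a) (e / a) u)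
        + σ ^ 2 / 2 * (a * betaFun κ (σ * √a) (e / a) u) ^ 2 - a) (Icc 0 T) u := by
  refine ((hasDerivWithinAt_betaFun (mul_ne_zero hσ (sqrt_pos.2 ha).ne')
    (div_neg_of_neg_of_pos he ha) hu).const_mul a).congr_deriv ?_
  rw [mul_pow, sq_sqrt ha.le]
  ring

end Riccati

section ExpIntegral

variable {X α : Type*} [TopologicalSpace X] [FirstCountableTopology X] [MeasurableSpace α]
  {μ : Measure α} [IsFiniteMeasure μ]

theorem integrable_exp_of_ae_nonpos {g : α → ℝ} (hg : AEStronglyMeasurable g μ)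
    (hg0 : ∀ᵐ a ∂μ, g a ≤ 0) : Integrable (fun a => exp (g a)) μ :=
  (integrable_const 1).mono' (continuous_exp.comp_aestronglyMeasurable hg)
    (hg0.mono fun a ha => by rwa [norm_eq_abs, abs_exp, exp_le_one_iff])

theorem continuousOn_integral_exp_of_ae_nonpos {g : X → α → ℝ} {s : Set X}
    (hmeas : ∀ x ∈ s, AEStronglyMeasurable (g x) μ) (hg0 : ∀ x ∈ s, ∀ᵐ a ∂μ, g x a ≤ 0)
    (hcont : ∀ a, ContinuousOn (fun x => g x a) s) :
    ContinuousOn (fun x => ∫ a, exp (g x a) ∂μ) s :=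
  continuousOn_of_dominated (bound := fun _ => 1)
    (fun x hx => continuous_exp.comp_aestronglyMeasurable (hmeas x hx))
    (fun x hx => (hg0 x hx).mono fun a ha => by rwa [norm_eq_abs, abs_exp, exp_le_one_iff])
    (integrable_const 1) (ae_of_all _ fun a => continuous_exp.comp_continuousOn (hcont a))

end ExpIntegral

section NonnegSupport

variable {X : Type*} [TopologicalSpace X] [FirstCountableTopology X] {s : Set X} {f₁ f₂ : X → ℝ}

theorem integrable_exp_mul_of_nonpos {μ : Measure ℝ} [IsFiniteMeasure μ]
    (hμ : ∀ᵐ y ∂μ, 0 ≤ y) {θ : ℝ} (hθ : θ ≤ 0) : Integrable (fun y => exp (θ * y)) μ :=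
  integrable_exp_of_ae_nonpos (by fun_prop)
    (hμ.mono fun _ hy => mul_nonpos_of_nonpos_of_nonneg hθ hy)

theorem integrable_exp_mul_add_mul_of_nonpos {μ : Measure (ℝ × ℝ)} [IsFiniteMeasure μ]
    (hμ : ∀ᵐ p ∂μ, 0 ≤ p.1 ∧ 0 ≤ p.2) {θ₁ θ₂ : ℝ} (hθ₁ : θ₁ ≤ 0) (hθ₂ : θ₂ ≤ 0) :
    Integrable (fun p : ℝ × ℝ => exp (θ₁ * p.1 + θ₂ * p.2)) μ :=
  integrable_exp_of_ae_nonpos (by fun_prop) (hμ.mono fun _ hp =>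
    add_nonpos (mul_nonpos_of_nonpos_of_nonneg hθ₁ hp.1) (mul_nonpos_of_nonpos_of_nonneg hθ₂ hp.2))

theorem ContinuousOn.integral_exp_mul {μ : Measure ℝ} [IsFiniteMeasure μ]
    (hf₁ : ContinuousOn f₁ s) (hμ : ∀ᵐ y ∂μ, 0 ≤ y) (hf₁0 : ∀ x ∈ s, f₁ x ≤ 0) :
    ContinuousOn (fun x => ∫ y, exp (f₁ x * y) ∂μ) s :=
  continuousOn_integral_exp_of_ae_nonpos (fun _ _ => by fun_prop)
    (fun x hx => hμ.mono fun _ hy => mul_nonpos_of_nonpos_of_nonneg (hf₁0 x hx) hy)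
    (fun _ => hf₁.mul continuousOn_const)

theorem ContinuousOn.integral_exp_mul_add_mul {μ : Measure (ℝ × ℝ)} [IsFiniteMeasure μ]
    (hf₁ : ContinuousOn f₁ s) (hf₂ : ContinuousOn f₂ s) (hμ : ∀ᵐ p ∂μ, 0 ≤ p.1 ∧ 0 ≤ p.2)
    (hf₁0 : ∀ x ∈ s, f₁ x ≤ 0) (hf₂0 : ∀ x ∈ s, f₂ x ≤ 0) :
    ContinuousOn (fun x => ∫ p, exp (f₁ x * p.1 + f₂ x * p.2) ∂μ) s :=
  continuousOn_integral_exp_of_ae_nonpos (fun _ _ => by fun_prop)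
    (fun x hx => hμ.mono fun _ hp => add_nonpos (mul_nonpos_of_nonpos_of_nonneg (hf₁0 x hx) hp.1)
      (mul_nonpos_of_nonpos_of_nonneg (hf₂0 x hx) hp.2))
    (fun _ => (hf₁.mul continuousOn_const).add (hf₂.mul continuousOn_const))

end NonnegSupport

theorem generalized_riccati_beta_solution_general
    (T aℓ bℓ cℓ dg eg fg κA κB σA σB αA αB cA cB dA dB lA lB lc lam : ℝ)
    (haℓ : 0 < aℓ) (hbℓ : 0 < bℓ)
    (heg : eg < 0) (hfg : fg < 0)
    (hσA : 0 < σA) (hσB : 0 < σB)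
    (hcA : 0 ≤ cA) (hcB : 0 ≤ cB) (hdA : 0 ≤ dA) (hdB : 0 ≤ dB)
    (FA FB : Measure ℝ) (FAB : Measure (ℝ × ℝ))
    [IsProbabilityMeasure FA] [IsProbabilityMeasure FB] [IsProbabilityMeasure FAB]
    (hFA : FA (Set.Iio (0:ℝ)) = 0) (hFB : FB (Set.Iio (0:ℝ)) = 0)
    (hFAB : FAB {p : ℝ × ℝ | ¬ (0 ≤ p.1 ∧ 0 ≤ p.2)} = 0)
    (Φ : ℝ → ℝ → ℝ) (ΦA ΦB : ℝ → ℝ)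
    (hΦ : ∀ a b : ℝ, Φ a b = ∫ p : ℝ × ℝ, Real.exp (a * p.1 + b * p.2) ∂FAB)
    (hΦA : ∀ a : ℝ, ΦA a = ∫ y : ℝ, Real.exp (a * y) ∂FA)
    (hΦB : ∀ a : ℝ, ΦB a = ∫ y : ℝ, Real.exp (a * y) ∂FB)
    (βA βB βAB : ℝ → ℝ)
    (hβA : ∀ u : ℝ, βA u = aℓ * betaFun κA (σA * Real.sqrt aℓ) (eg / aℓ) u)
    (hβB : ∀ u : ℝ, βB u = bℓ * betaFun κB (σB * Real.sqrt bℓ) (fg / bℓ) u)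
    (hβAB : ∀ u : ℝ, βAB u = dg - (lam + cℓ) * u +
      ∫ v in (0:ℝ)..u, (αA * βA v + αB * βB v + lc * Φ (cA * βA v) (cB * βB v)
        + lA * ΦA (dA * βA v) + lB * ΦB (dB * βB v))) :
    (∀ u ∈ Icc (0:ℝ) T, βA u ≤ 0 ∧ βB u ≤ 0) ∧
    (∀ u ∈ Icc (0:ℝ) T,
      Integrable (fun p : ℝ × ℝ => Real.exp (cA * βA u * p.1 + cB * βB u * p.2)) FAB ∧
      Integrable (fun y : ℝ => Real.exp (dA * βA u * y)) FA ∧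
      Integrable (fun y : ℝ => Real.exp (dB * βB u * y)) FB) ∧
    βA 0 = eg ∧ βB 0 = fg ∧ βAB 0 = dg ∧
    (∀ u ∈ Icc (0:ℝ) T, HasDerivWithinAt βA
      (-κA * βA u + σA ^ 2 / 2 * (βA u) ^ 2 - aℓ) (Icc (0:ℝ) T) u) ∧
    (∀ u ∈ Icc (0:ℝ) T, HasDerivWithinAt βB
      (-κB * βB u + σB ^ 2 / 2 * (βB u) ^ 2 - bℓ) (Icc (0:ℝ) T) u) ∧
    (∀ u ∈ Icc (0:ℝ) T, HasDerivWithinAt βAB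
      (αA * βA u + αB * βB u - lam - cℓ + lc * Φ (cA * βA u) (cB * βB u)
        + lA * ΦA (dA * βA u) + lB * ΦB (dB * βB u)) (Icc (0:ℝ) T) u) := by
  have hA0 (u : ℝ) (hu : u ∈ Icc (0:ℝ) T) : βA u ≤ 0 := hβA u ▸ mul_betaFun_nonpos haℓ heg hu.1
  have hB0 (u : ℝ) (hu : u ∈ Icc (0:ℝ) T) : βB u ≤ 0 := hβB u ▸ mul_betaFun_nonpos hbℓ hfg hu.1
  have hAd (u : ℝ) (hu : u ∈ Icc (0:ℝ) T) :
      HasDerivWithinAt βA (-κA * βA u + σA ^ 2 / 2 * βA u ^ 2 - aℓ) (Icc 0 T) u := by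
    simpa only [← hβA] using hasDerivWithinAt_mul_betaFun (κ := κA) hσA.ne' haℓ heg hu
  have hBd (u : ℝ) (hu : u ∈ Icc (0:ℝ) T) :
      HasDerivWithinAt βB (-κB * βB u + σB ^ 2 / 2 * βB u ^ 2 - bℓ) (Icc 0 T) u := by
    simpa only [← hβB] using hasDerivWithinAt_mul_betaFun (κ := κB) hσB.ne' hbℓ hfg hu
  have hAc : ContinuousOn βA (Icc 0 T) := fun u hu => (hAd u hu).continuousWithinAt
  have hBc : ContinuousOn βB (Icc 0 T) := fun u hu => (hBd u hu).continuousWithinAt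
  have hFA' : ∀ᵐ y ∂FA, 0 ≤ y := ae_iff.2 <| by simp only [not_le]; exact hFA
  have hFB' : ∀ᵐ y ∂FB, 0 ≤ y := ae_iff.2 <| by simp only [not_le]; exact hFB
  have hFAB' : ∀ᵐ p ∂FAB, 0 ≤ p.1 ∧ 0 ≤ p.2 := ae_iff.2 hFAB
  have hmulA {c : ℝ} (hc : 0 ≤ c) (u) (hu : u ∈ Icc (0:ℝ) T) : c * βA u ≤ 0 :=
    mul_nonpos_of_nonneg_of_nonpos hc (hA0 u hu)
  have hmulB {c : ℝ} (hc : 0 ≤ c) (u) (hu : u ∈ Icc (0:ℝ) T) : c * βB u ≤ 0 :=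
    mul_nonpos_of_nonneg_of_nonpos hc (hB0 u hu)
  have hcont : ContinuousOn (fun v => αA * βA v + αB * βB v + lc * Φ (cA * βA v) (cB * βB v)
      + lA * ΦA (dA * βA v) + lB * ΦB (dB * βB v)) (Icc 0 T) := by
    simp only [hΦ, hΦA, hΦB]
    refine ((((continuousOn_const.mul hAc).add (continuousOn_const.mul hBc)).add
      (continuousOn_const.mul ?_)).add (continuousOn_const.mul ?_)).add (continuousOn_const.mul ?_)
    · exact (continuousOn_const.mul hAc).integral_exp_mul_add_mul (continuousOn_const.mul hBc) hFAB'
        (hmulA hcA) (hmulB hcB)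
    · exact (continuousOn_const.mul hAc).integral_exp_mul hFA' (hmulA hdA)
    · exact (continuousOn_const.mul hBc).integral_exp_mul hFB' (hmulB hdB)
  refine ⟨fun u hu => ⟨hA0 u hu, hB0 u hu⟩, fun u hu => ⟨?_, ?_, ?_⟩,
    by rw [hβA, mul_betaFun_zero haℓ.ne'], by rw [hβB, mul_betaFun_zero hbℓ.ne'],
    by simp [hβAB], hAd, hBd, fun u hu => ?_⟩
  · exact integrable_exp_mul_add_mul_of_nonpos hFAB' (hmulA hcA u hu) (hmulB hcB u hu)
  · exact integrable_exp_mul_of_nonpos hFA' (hmulA hdA u hu)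
  · exact integrable_exp_mul_of_nonpos hFB' (hmulB hdB u hu)
  rw [funext hβAB]
  refine ((((hasDerivAt_id' u).const_mul (lam + cℓ)).const_sub dg).hasDerivWithinAt.add
    (hcont.hasDerivWithinAt_intervalIntegral hu)).congr_deriv ?_
  ring

/-- Explicit solution of the generalized Riccati system
`R(a_ℓ, b_ℓ, c_ℓ)` for the exponential coefficients `(β_A, β_B, β_{AB})` of the
exponential-affine transform of the two-counterparty jump-CIR model:
`β_A(u) = a_ℓ·β(κ_A, σ_A√a_ℓ, e_g/a_ℓ; u)`, `β_B(u) = b_ℓ·β(κ_B, σ_B√b_ℓ, f_g/b_ℓ; u)`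
and `β_{AB}` given by integration. Both `β_A, β_B` are nonpositive on `[0,T]`
(so all exponential moments are finite) and the triple solves the system with
the stated initial conditions. -/
theorem generalized_riccati_beta_solution
    (T aℓ bℓ cℓ dg eg fg κA κB σA σB αA αB cA cB dA dB lA lB lc lam : ℝ)
    (hT : 0 < T) (haℓ : 0 < aℓ) (hbℓ : 0 < bℓ)
    (heg : eg < 0) (hfg : fg < 0)
    (hκA : 0 < κA) (hκB : 0 < κB) (hσA : 0 < σA) (hσB : 0 < σB)
    (hαA : 0 ≤ αA) (hαB : 0 ≤ αB)
    (hcA : 0 ≤ cA) (hcB : 0 ≤ cB) (hdA : 0 ≤ dA) (hdB : 0 ≤ dB)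
    (hlA : 0 ≤ lA) (hlB : 0 ≤ lB) (hlc : 0 ≤ lc)
    (hlam : lam = lA + lB + lc)
    (FA FB : Measure ℝ) (FAB : Measure (ℝ × ℝ))
    [IsProbabilityMeasure FA] [IsProbabilityMeasure FB] [IsProbabilityMeasure FAB]
    (hFA : FA (Set.Iio (0:ℝ)) = 0) (hFB : FB (Set.Iio (0:ℝ)) = 0)
    (hFAB : FAB {p : ℝ × ℝ | ¬ (0 ≤ p.1 ∧ 0 ≤ p.2)} = 0)
    (Φ : ℝ → ℝ → ℝ) (ΦA ΦB : ℝ → ℝ)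
    (hΦ : ∀ a b : ℝ, Φ a b = ∫ p : ℝ × ℝ, Real.exp (a * p.1 + b * p.2) ∂FAB)
    (hΦA : ∀ a : ℝ, ΦA a = ∫ y : ℝ, Real.exp (a * y) ∂FA)
    (hΦB : ∀ a : ℝ, ΦB a = ∫ y : ℝ, Real.exp (a * y) ∂FB)
    (βA βB βAB : ℝ → ℝ)
    (hβA : ∀ u : ℝ, βA u = aℓ * betaFun κA (σA * Real.sqrt aℓ) (eg / aℓ) u)
    (hβB : ∀ u : ℝ, βB u = bℓ * betaFun κB (σB * Real.sqrt bℓ) (fg / bℓ) u)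
    (hβAB : ∀ u : ℝ, βAB u = dg - (lam + cℓ) * u +
      ∫ v in (0:ℝ)..u, (αA * βA v + αB * βB v + lc * Φ (cA * βA v) (cB * βB v)
        + lA * ΦA (dA * βA v) + lB * ΦB (dB * βB v))) :
    (∀ u ∈ Icc (0:ℝ) T, βA u ≤ 0 ∧ βB u ≤ 0) ∧
    (∀ u ∈ Icc (0:ℝ) T,
      Integrable (fun p : ℝ × ℝ => Real.exp (cA * βA u * p.1 + cB * βB u * p.2)) FAB ∧
      Integrable (fun y : ℝ => Real.exp (dA * βA u * y)) FA ∧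
      Integrable (fun y : ℝ => Real.exp (dB * βB u * y)) FB) ∧
    βA 0 = eg ∧ βB 0 = fg ∧ βAB 0 = dg ∧
    (∀ u ∈ Icc (0:ℝ) T, HasDerivWithinAt βA
      (-κA * βA u + σA ^ 2 / 2 * (βA u) ^ 2 - aℓ) (Icc (0:ℝ) T) u) ∧
    (∀ u ∈ Icc (0:ℝ) T, HasDerivWithinAt βB
      (-κB * βB u + σB ^ 2 / 2 * (βB u) ^ 2 - bℓ) (Icc (0:ℝ) T) u) ∧
    (∀ u ∈ Icc (0:ℝ) T, HasDerivWithinAt βAB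
      (αA * βA u + αB * βB u - lam - cℓ + lc * Φ (cA * βA u) (cB * βB u)
        + lA * ΦA (dA * βA u) + lB * ΦB (dB * βB u)) (Icc (0:ℝ) T) u) :=
  generalized_riccati_beta_solution_general T aℓ bℓ cℓ dg eg fg κA κB σA σB αA αB cA cB dA dB lA lB
    lc lam haℓ hbℓ heg hfg hσA hσB hcA hcB hdA hdB FA FB FAB hFA hFB hFAB Φ ΦA ΦB hΦ hΦA hΦB βA βB
    βAB hβA hβB hβAB
end
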